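/- arXiv:2311.01959 — 2 statements merged into one kernel-verified Lean document; each statement's English description precedes it below -/
import Mathlib

section
/- For every linear subspace W ⊆ ℝ^n, the circuit imbalance measure of W equals that of its orthogonal complement: κ(W) = κ(W^⊥). -/
noncomputable section

open Classical

/-- A nonzero `g ∈ W` is an elementary vector of `W` if no nonzero `h ∈ W`
has strictly smaller support. -/
def IsElementaryVec {n : ℕ} (W : Submodule ℝ (EuclideanSpace ℝ (Fin n)))
    (g : EuclideanSpace ℝ (Fin n)) : Prop :=
  g ∈ W ∧ g ≠ 0 ∧
    ∀ h : EuclideanSpace ℝ (Fin n), h ∈ W → h ≠ 0 →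
      ¬ ({i | h i ≠ 0} ⊂ {i | g i ≠ 0})

/-- The circuit imbalance measure `κ(W)`: the maximum of `|g j / g i|` over elementary
vectors `g` of `W` and `i, j ∈ supp(g)`, with `κ(W) := 1` for the trivial subspaces. -/
noncomputable def kappaSub {n : ℕ} (W : Submodule ℝ (EuclideanSpace ℝ (Fin n))) : ℝ :=
  if W = ⊥ ∨ W = ⊤ then 1
  else sSup {t : ℝ | ∃ g : EuclideanSpace ℝ (Fin n), IsElementaryVec W g ∧
    ∃ i j : Fin n, g i ≠ 0 ∧ g j ≠ 0 ∧ t = |g j / g i|}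

/-!
Let `g` be an elementary vector of `W` and `i ≠ j` two indices of its support `C`. No vector of
`W` supported in `(C \ {i, j}) ∪ {i}` has a nonzero `i`-th coordinate, since its support would lie
strictly inside `C`. By duality, `(Wᗮ ⊓ Z)ᗮ = W ⊔ Zᗮ` for the coordinate subspace `Z` of vectors
vanishing on `C \ {i, j}`, so some `h ∈ Wᗮ` vanishing on `C \ {i, j}` has `h i ≠ 0`, and `h` can
be taken elementary. Now `⟪g, h⟫ = 0` reads `g i * h i + g j * h j = 0`, whence
`|g j / g i| = |h i / h j|`. So every imbalance of `W` is one of `Wᗮ`, and `Wᗮᗮ = W` gives the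
converse.
-/

open Function

namespace EuclideanSpace

variable {ι : Type*}

def supportedOn (S : Set ι) : Submodule ℝ (EuclideanSpace ℝ ι) where
  carrier := {x | support x ⊆ S}
  add_mem' {x y} hx hy := by
    simp only [Set.mem_ofPred_eq, support_subset_iff'] at *
    intro k hk
    simp [hx k hk, hy k hk]
  zero_mem' := by simp
  smul_mem' c x hx := by
    simp only [Set.mem_ofPred_eq, support_subset_iff'] at *
    intro k hk
    simp [hx k hk]

theorem mem_supportedOn {S : Set ι} {x : EuclideanSpace ℝ ι} :
    x ∈ supportedOn S ↔ support x ⊆ S := Iff.rfl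

variable [Fintype ι]

theorem orthogonal_supportedOn (S : Set ι) : (supportedOn S)ᗮ = supportedOn Sᶜ := by
  ext z
  simp only [Submodule.mem_orthogonal, mem_supportedOn, support_subset_iff']
  constructor
  · intro hz k hk
    rw [Set.notMem_compl_iff] at hk
    have hk' : ∀ l ∉ S, single k (1 : ℝ) l = 0 := fun l hl => by
      simp [(ne_of_mem_of_not_mem hk hl).symm]
    simpa [inner_single_left] using hz _ hk'
  · intro hz u hu
    simp only [PiLp.inner_apply]
    refine Finset.sum_eq_zero fun k _ => ?_
    by_cases hk : k ∈ S
    · simp [hz k (by simpa using hk)]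
    · simp [hu k hk]

theorem exists_apply_eq_one_of_forall_orthogonal_apply_eq_zero
    {W : Submodule ℝ (EuclideanSpace ℝ ι)} {S : Set ι} {i : ι} (hi : i ∈ S)
    (h : ∀ v ∈ Wᗮ ⊓ supportedOn S, v i = 0) :
    ∃ w ∈ W ⊓ supportedOn (insert i Sᶜ), w i = 1 := by
  have hdual : Wᗮ ⊓ supportedOn S = (W ⊔ supportedOn Sᶜ)ᗮ := by
    rw [← Submodule.inf_orthogonal, orthogonal_supportedOn, compl_compl]
  have hsingle : single i (1 : ℝ) ∈ W ⊔ supportedOn Sᶜ := by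
    rw [← Submodule.orthogonal_orthogonal (W ⊔ supportedOn Sᶜ), ← hdual,
      Submodule.mem_orthogonal]
    intro v hv
    simp [inner_single_right, h v hv]
  obtain ⟨w, hw, z, hz, hwz⟩ := Submodule.mem_sup.1 hsingle
  have hz' : ∀ k ∈ S, z k = 0 := fun k hk =>
    support_subset_iff'.1 (mem_supportedOn.1 hz) k (Set.notMem_compl_iff.2 hk)
  have hw_eq : ∀ k, w k = single i (1 : ℝ) k - z k := fun k => by
    simp [← hwz]
  refine ⟨w, ⟨hw, support_subset_iff'.2 fun k hk => ?_⟩, by simp [hw_eq, hz' i hi]⟩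
  simp only [Set.mem_insert_iff, Set.mem_compl_iff, not_or, not_not] at hk
  simp [hw_eq, hz' k hk.2, hk.1]

theorem mul_add_mul_eq_zero_of_inner_eq_zero {x y : EuclideanSpace ℝ ι} (hxy : inner ℝ x y = 0)
    {i j : ι} (hij : i ≠ j)
    (h : ∀ k, k ≠ i → k ≠ j → x k * y k = 0) : x i * y i + x j * y j = 0 := by
  rw [← hxy, PiLp.inner_apply, Finset.sum_eq_add i j hij]
  · simp [mul_comm]
  · intro k _ hk
    simpa [mul_comm] using h k hk.1 hk.2
  all_goals simp

end EuclideanSpace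

section

open EuclideanSpace

variable {n : ℕ}

theorem exists_isElementaryVec_support_subset {V : Submodule ℝ (EuclideanSpace ℝ (Fin n))}
    {v : EuclideanSpace ℝ (Fin n)} (hv : v ∈ V) {i : Fin n} (hvi : v i ≠ 0) :
    ∃ h, IsElementaryVec V h ∧ support h ⊆ support v ∧ h i ≠ 0 := by
  obtain ⟨h, ⟨hV, hsupp, hi⟩, hmin⟩ := exists_minimalFor_of_wellFoundedLT
    (fun h : EuclideanSpace ℝ (Fin n) => h ∈ V ∧ support h ⊆ support v ∧ h i ≠ 0)
    (fun h => support h) ⟨v, hv, subset_rfl, hvi⟩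
  refine ⟨h, ⟨hV, fun h0 => hi (by simp [h0]), fun u huV hu0 hlt => ?_⟩, hsupp, hi⟩
  change support u ⊂ support h at hlt
  by_cases hui : u i = 0
  · -- cancel a coordinate `l` of `u` in `h`, keeping the coordinate `i`
    obtain ⟨l, hl⟩ : ∃ l, u l ≠ 0 := by
      by_contra! hu
      exact hu0 (PiLp.ext hu)
    set h' := h - (h l / u l) • u
    have hsub : support h' ⊆ support h := support_subset_iff'.2 fun k hk => by
      have hk' : u k = 0 := notMem_support.1 fun hu => hk (hlt.1 hu)
      simp [h', notMem_support.1 hk, hk']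
    have hl' : l ∉ support h' := by simp [h', div_mul_cancel₀ _ hl]
    have := hmin ⟨V.sub_mem hV (V.smul_mem _ huV), hsub.trans hsupp, by simpa [h', hui]⟩ hsub
    exact hl' (this (hlt.1 (mem_support.2 hl)))
  · exact hlt.2 (hmin ⟨huV, hlt.1.trans hsupp, hui⟩ hlt.1)

theorem IsElementaryVec.exists_mem_orthogonal_apply_ne_zero
    {W : Submodule ℝ (EuclideanSpace ℝ (Fin n))} {g : EuclideanSpace ℝ (Fin n)}
    (hg : IsElementaryVec W g) {i j : Fin n} (hgi : g i ≠ 0) (hgj : g j ≠ 0) (hij : i ≠ j) :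
    ∃ v ∈ Wᗮ ⊓ supportedOn (support g \ {i, j})ᶜ, v i ≠ 0 := by
  by_contra! hcon
  obtain ⟨w, ⟨hwW, hwS⟩, hwi⟩ :=
    exists_apply_eq_one_of_forall_orthogonal_apply_eq_zero (by simp) hcon
  have hws : support w ⊆ insert i (support g \ {i, j}) := by
    simpa only [compl_compl] using mem_supportedOn.1 hwS
  refine hg.2.2 w hwW (fun hw0 => by simp [hw0] at hwi) ⟨?_, fun hsub => ?_⟩
  · exact hws.trans (Set.insert_subset (mem_support.2 hgi) Set.sdiff_subset)
  · simpa [hij.symm] using hws (hsub (mem_support.2 hgj))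

def imbalances (W : Submodule ℝ (EuclideanSpace ℝ (Fin n))) : Set ℝ :=
  {t : ℝ | ∃ g : EuclideanSpace ℝ (Fin n), IsElementaryVec W g ∧
    ∃ i j : Fin n, g i ≠ 0 ∧ g j ≠ 0 ∧ t = |g j / g i|}

theorem imbalances_subset_orthogonal {W : Submodule ℝ (EuclideanSpace ℝ (Fin n))}
    (hW : W ≠ ⊤) : imbalances W ⊆ imbalances Wᗮ := by
  rintro _ ⟨g, hg, i, j, hgi, hgj, rfl⟩
  obtain rfl | hij := eq_or_ne i j
  · obtain ⟨v, hv, hv0⟩ := Submodule.ne_bot_iff _ |>.1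
      (mt Submodule.orthogonal_eq_bot_iff.1 hW)
    obtain ⟨k, hk⟩ : ∃ k, v k ≠ 0 := by
      by_contra! hv
      exact hv0 (PiLp.ext hv)
    obtain ⟨h, hh, -, hhk⟩ := exists_isElementaryVec_support_subset hv hk
    exact ⟨h, hh, k, k, hhk, hhk, by simp [hgi, hhk]⟩
  obtain ⟨v, ⟨hvW, hvS⟩, hvi⟩ := hg.exists_mem_orthogonal_apply_ne_zero hgi hgj hij
  obtain ⟨h, hh, hsupp, hhi⟩ := exists_isElementaryVec_support_subset hvW hvi
  have hpair : g i * h i + g j * h j = 0 :=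
    mul_add_mul_eq_zero_of_inner_eq_zero (Submodule.inner_right_of_mem_orthogonal hg.1 hh.1)
      hij fun k hki hkj => by
        by_cases hgk : g k = 0
        · simp [hgk]
        · have hk : k ∉ support h := fun hk => hsupp.trans hvS hk (by simp [hgk, hki, hkj])
          simp [notMem_support.1 hk]
  have hhj : h j ≠ 0 := by
    intro hhj
    simp [hhj, hgi, hhi] at hpair
  refine ⟨h, hh, j, i, hhj, hhi, ?_⟩
  rw [abs_div, abs_div, div_eq_div_iff (abs_ne_zero.2 hgi) (abs_ne_zero.2 hhj), ← abs_mul,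
    ← abs_mul, show g j * h j = -(g i * h i) by linarith, abs_neg, mul_comm]

end

/-- For every linear subspace `W ⊆ ℝ^n`, `κ(W) = κ(W^⊥)`. -/
theorem kappa_orthogonal_complement {n : ℕ} (W : Submodule ℝ (EuclideanSpace ℝ (Fin n))) :
    kappaSub W = kappaSub Wᗮ := by
  have htriv : (Wᗮ = ⊥ ∨ Wᗮ = ⊤) ↔ (W = ⊥ ∨ W = ⊤) := by
    rw [Submodule.orthogonal_eq_bot_iff, Submodule.orthogonal_eq_top_iff, or_comm]
  by_cases hW : W = ⊥ ∨ W = ⊤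
  · simp only [kappaSub, if_pos hW, if_pos (htriv.2 hW)]
  · simp only [kappaSub, if_neg hW, if_neg (mt htriv.1 hW)]
    obtain ⟨hbot, htop⟩ := not_or.1 hW
    have hperp : Wᗮ ≠ ⊤ := mt (Submodule.orthogonal_eq_top_iff W).1 hbot
    congr 1
    refine (imbalances_subset_orthogonal htop).antisymm ?_
    simpa only [Submodule.orthogonal_orthogonal] using imbalances_subset_orthogonal hperp
end
end

section
/- Let f : ℝ^n → ℝ be a continuously differentiable convex function whose domain contains the box [0,u] (u ≥ 0), and let M ≥ 1 be such that for every index i ∈ [n] and every pair x, y ∈ ℝ^n with x_j = y_j for all j ≠ i, one has |∇_i f(x) − ∇_i f(y)| ≤ M·|x_i − y_i|. Let η > 0 and suppose x ∈ [0,u] satisfies f(x) ≤ min{f(z) : z ∈ [0,u]} + η. Then for every i ∈ [n]: (i) if ∇_i f(x) ≥ 2M√η then x_i ≤ √η/M, and (ii) if ∇_i f(x) ≤ −2M√η then x_i ≥ u_i − √η/M. -/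
/-!
If the directional derivative of `f` along `v` drops by at most `M |t|` between `x` and
`x + t v`, then comparing `f` with the parabola `t ↦ f x + t f'(x)v - M t² / 2` shows that
a step of length `s` against `v` lowers `f` by at least `s f'(x)v - M s² / 2`. When
`f'(x)v ≥ 2M√η` and `s = √η/M` this is `2η - η/(2M) > η`. So if `∂ᵢf(x) ≥ 2M√η` and
`xᵢ > √η/M`, decreasing `xᵢ` by `√η/M` stays in the box and beats `f x` by more than `η`,
which contradicts approximate minimality. Case (ii) is the same argument with `-eᵢ`.
-/

theorem mul_sub_sq_le_sub_of_hasDerivAt {g g' : ℝ → ℝ} {a b M : ℝ} (hab : a ≤ b)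
    (hg : ∀ t ∈ Set.Icc a b, HasDerivAt g (g' t) t)
    (hg' : ∀ t ∈ Set.Icc a b, g' b - M * (b - t) ≤ g' t) :
    (b - a) * g' b - M * (b - a) ^ 2 / 2 ≤ g b - g a := by
  let φ : ℝ → ℝ := fun t => g t - t * g' b - M * (b - t) ^ 2 / 2
  have hφ : ∀ t ∈ Set.Icc a b, HasDerivAt φ (g' t - g' b + M * (b - t)) t := fun t ht => by
    have := (((hg t ht).sub ((hasDerivAt_id t).mul_const (g' b))).sub
      (((((hasDerivAt_id t).const_sub b).pow 2).const_mul M).div_const 2))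
    refine this.congr_deriv ?_
    simp only [one_mul, Nat.cast_ofNat, id_eq, Nat.add_one_sub_one, pow_one, mul_neg, mul_one]
    ring
  have hmono : MonotoneOn φ (Set.Icc a b) :=
    monotoneOn_of_hasDerivWithinAt_nonneg (convex_Icc a b)
      (fun t ht => (hφ t ht).continuousAt.continuousWithinAt)
      (fun t ht => (hφ t (interior_subset ht)).hasDerivWithinAt)
      (fun t ht => by linarith [hg' t (interior_subset ht)])
  have := hmono (Set.left_mem_Icc.2 hab) (Set.right_mem_Icc.2 hab) hab
  norm_num [φ] at this
  linarith

section NormedSpace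

variable {E : Type*} [NormedAddCommGroup E] [NormedSpace ℝ E]

theorem hasDerivAt_comp_add_smul {f : E → ℝ} {x v : E} {t : ℝ}
    (hf : DifferentiableAt ℝ f (x + t • v)) :
    HasDerivAt (fun s : ℝ => f (x + s • v)) (fderiv ℝ f (x + t • v) v) t := by
  have hline : HasDerivAt (fun s : ℝ => x + s • v) v t := by
    simpa using ((hasDerivAt_id t).smul_const v).const_add x
  exact hf.hasFDerivAt.comp_hasDerivAt t hline

theorem apply_add_lt_of_two_mul_sqrt_le_fderiv {f : E → ℝ} (hf : Differentiable ℝ f)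
    {x v : E} {M η : ℝ} (hM : 1 ≤ M) (hη : 0 < η)
    (hL : ∀ t, |fderiv ℝ f (x + t • v) v - fderiv ℝ f x v| ≤ M * |t|)
    (hd : 2 * M * √η ≤ fderiv ℝ f x v) :
    f (x + (-(√η / M)) • v) + η < f x := by
  set r := √η
  set s := r / M
  have hr : 0 < r := Real.sqrt_pos.2 hη
  have hrr : r * r = η := Real.mul_self_sqrt hη.le
  have hs : 0 < s := div_pos hr (by linarith)
  have hMs : M * s = r := mul_div_cancel₀ r (by linarith)
  have hsr : s ≤ r := div_le_self hr.le hM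
  have hgain := mul_sub_sq_le_sub_of_hasDerivAt (g := fun t => f (x + t • v))
    (g' := fun t => fderiv ℝ f (x + t • v) v) (a := -s) (b := 0) (M := M) (by linarith)
    (fun t _ => hasDerivAt_comp_add_smul (hf _))
    (fun t ht => by
      have := (abs_le.1 (hL t)).1
      rw [abs_of_nonpos ht.2] at this
      simp only [zero_smul, add_zero]
      linarith)
  simp only [zero_smul, add_zero, sub_neg_eq_add, zero_add] at hgain
  nlinarith [mul_le_mul_of_nonneg_left hd hs.le]

end NormedSpace

theorem add_smul_smul_single_eq_update {n : ℕ} (x : Fin n → ℝ) (i : Fin n) (t c : ℝ) :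
    x + t • c • (Pi.single i 1 : Fin n → ℝ) = Function.update x i (x i + t * c) := by
  ext j
  rcases eq_or_ne j i with rfl | hj
  · simp
  · simp [hj]

theorem abs_fderiv_add_smul_single_sub_le {n : ℕ} {f : (Fin n → ℝ) → ℝ} {M : ℝ}
    (hsmooth : ∀ (i : Fin n) (x y : Fin n → ℝ), (∀ j, j ≠ i → x j = y j) →
      |fderiv ℝ f x (Pi.single i 1) - fderiv ℝ f y (Pi.single i 1)| ≤ M * |x i - y i|)
    (x : Fin n → ℝ) (i : Fin n) {c : ℝ} (hc : |c| = 1) (t : ℝ) :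
    |fderiv ℝ f (x + t • c • Pi.single i 1) (c • Pi.single i 1) -
      fderiv ℝ f x (c • Pi.single i 1)| ≤ M * |t| := by
  have h := hsmooth i (x + t • c • Pi.single i 1) x fun j hj => by simp [hj]
  simp only [map_smul, smul_eq_mul, ← mul_sub, abs_mul, hc, one_mul]
  simpa [add_smul_smul_single_eq_update, abs_mul, hc] using h

theorem approx_minimizer_coordinate_bounds_general {n : ℕ} (f : (Fin n → ℝ) → ℝ)
    (hf : ContDiff ℝ 1 f)
    (u : Fin n → ℝ) (M : ℝ) (hM : 1 ≤ M)
    (hsmooth : ∀ (i : Fin n) (x y : Fin n → ℝ), (∀ j, j ≠ i → x j = y j) →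
      |fderiv ℝ f x (Pi.single i 1) - fderiv ℝ f y (Pi.single i 1)| ≤ M * |x i - y i|)
    (η : ℝ) (hη : 0 < η) (x : Fin n → ℝ) (hx0 : 0 ≤ x) (hxu : x ≤ u)
    (hxmin : ∀ z : Fin n → ℝ, 0 ≤ z → z ≤ u → f x ≤ f z + η) :
    ∀ i : Fin n,
      (fderiv ℝ f x (Pi.single i 1) ≥ 2 * M * Real.sqrt η → x i ≤ Real.sqrt η / M) ∧
      (fderiv ℝ f x (Pi.single i 1) ≤ -(2 * M * Real.sqrt η) →
        x i ≥ u i - Real.sqrt η / M) := by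
  intro i
  have hstep : ∀ c : ℝ, |c| = 1 → 2 * M * √η ≤ c * fderiv ℝ f x (Pi.single i 1) →
      f (Function.update x i (x i - √η / M * c)) + η < f x := fun c hc hd => by
    have := apply_add_lt_of_two_mul_sqrt_le_fderiv (hf.differentiable one_ne_zero) hM hη
      (abs_fderiv_add_smul_single_sub_le hsmooth x i hc) (by simpa using hd)
    rwa [add_smul_smul_single_eq_update, neg_mul, ← sub_eq_add_neg] at this
  have hr : 0 ≤ √η / M := by positivity
  have hxi0 : 0 ≤ x i := hx0 i
  have hxiu : x i ≤ u i := hxu i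
  refine ⟨fun hgrad => ?_, fun hgrad => ?_⟩
  · by_contra! hxi
    refine (hstep 1 (by simp) (by simpa using hgrad)).not_ge (hxmin _ ?_ ?_)
    · exact le_update_iff.2 ⟨by simp only [Pi.zero_apply, mul_one]; linarith, fun j _ => hx0 j⟩
    · exact update_le_iff.2 ⟨by linarith, fun j _ => hxu j⟩
  · by_contra! hxi
    refine (hstep (-1) (by simp) (by linarith)).not_ge (hxmin _ ?_ ?_)
    · exact le_update_iff.2 ⟨by simp only [Pi.zero_apply]; linarith, fun j _ => hx0 j⟩
    · exact update_le_iff.2 ⟨by linarith, fun j _ => hxu j⟩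

/-- Let `f : ℝ^n → ℝ` be continuously differentiable and convex, and let
`M ≥ 1` be a coordinatewise smoothness constant: whenever `x, y` differ only in
coordinate `i`, `|∇_i f(x) − ∇_i f(y)| ≤ M|x_i − y_i|`. If `η > 0` and `x ∈ [0,u]` is an
`η`-approximate minimizer of `f` over `[0,u]`, then for every `i`:
(i) `∇_i f(x) ≥ 2M√η → x_i ≤ √η/M`, and (ii) `∇_i f(x) ≤ −2M√η → x_i ≥ u_i − √η/M`. -/
theorem approx_minimizer_coordinate_bounds {n : ℕ} (f : (Fin n → ℝ) → ℝ)
    (hf : ContDiff ℝ 1 f) (hconv : ConvexOn ℝ Set.univ f)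
    (u : Fin n → ℝ) (hu : 0 ≤ u) (M : ℝ) (hM : 1 ≤ M)
    (hsmooth : ∀ (i : Fin n) (x y : Fin n → ℝ), (∀ j, j ≠ i → x j = y j) →
      |fderiv ℝ f x (Pi.single i 1) - fderiv ℝ f y (Pi.single i 1)| ≤ M * |x i - y i|)
    (η : ℝ) (hη : 0 < η) (x : Fin n → ℝ) (hx0 : 0 ≤ x) (hxu : x ≤ u)
    (hxmin : ∀ z : Fin n → ℝ, 0 ≤ z → z ≤ u → f x ≤ f z + η) :
    ∀ i : Fin n,
      (fderiv ℝ f x (Pi.single i 1) ≥ 2 * M * Real.sqrt η → x i ≤ Real.sqrt η / M) ∧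
      (fderiv ℝ f x (Pi.single i 1) ≤ -(2 * M * Real.sqrt η) →
        x i ≥ u i - Real.sqrt η / M) :=
  approx_minimizer_coordinate_bounds_general f hf u M hM hsmooth η hη x hx0 hxu hxmin
end
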